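/- arXiv:1804.05041 — 2 statements merged into one kernel-verified Lean document; each statement's English description precedes it below -/
import Mathlib

section
/- For all natural numbers k and s with k ≥ s ≥ 2, every k-surviving Turing degree is also s-surviving: if A : ℕ → ℕ is such that some k-surviving function is computable relative to A, then some s-surviving function is computable relative to A. -/
/-! Basic notions: subtrees of `X^{<ω}`, `k`-branching trees, `k`-trees, paths,
computable trees, relative computability (oracle machines), surviving functions,
and computable traceability. -/

/-- A subtree of `X^{<ω}`: a set of finite strings closed under initial segments. -/
def IsSubtree {X : Type*} (T : Set (List X)) : Prop :=
  ∀ σ ∈ T, ∀ τ : List X, τ <+: σ → τ ∈ T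

/-- The set of immediate successors of the node `σ` in the tree `T`. -/
def succSet {X : Type*} (T : Set (List X)) (σ : List X) : Set X :=
  {x | σ ++ [x] ∈ T}

/-- A `k`-branching tree: a subtree in which every node has either exactly `1`
or exactly `k` immediate successors. -/
def IsBranchingTree {X : Type*} (k : ℕ) (T : Set (List X)) : Prop :=
  IsSubtree T ∧ ∀ σ ∈ T, (succSet T σ).ncard = 1 ∨ (succSet T σ).ncard = k

/-- A `k`-tree: a subtree in which every node has at least `1` and at most `k`
immediate successors. -/
def IsKTree {X : Type*} (k : ℕ) (T : Set (List X)) : Prop :=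
  IsSubtree T ∧ ∀ σ ∈ T, 1 ≤ (succSet T σ).ncard ∧ (succSet T σ).ncard ≤ k

/-- `f` is a path through `T`: every finite initial segment of `f` belongs to `T`. -/
def IsPathThrough {X : Type*} (f : ℕ → X) (T : Set (List X)) : Prop :=
  ∀ n : ℕ, (List.range n).map f ∈ T

/-- A tree is computable when membership is decidable by an algorithm. -/
def ComputableTree {X : Type*} [Primcodable X] (T : Set (List X)) : Prop :=
  ComputablePred (· ∈ T)

/-- Partial functions `ℕ →. ℕ` which are partial recursive relative to the oracle `O`
(the relativization of `Nat.Partrec`). -/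
inductive RecursiveIn' (O : ℕ → ℕ) : (ℕ →. ℕ) → Prop
  | oracle : RecursiveIn' O (fun n => Part.some (O n))
  | zero : RecursiveIn' O (pure 0)
  | succ : RecursiveIn' O ↑Nat.succ
  | left : RecursiveIn' O ↑fun n : ℕ => n.unpair.1
  | right : RecursiveIn' O ↑fun n : ℕ => n.unpair.2
  | pair {f g} : RecursiveIn' O f → RecursiveIn' O g →
      RecursiveIn' O fun n => Nat.pair <$> f n <*> g n
  | comp {f g} : RecursiveIn' O f → RecursiveIn' O g →
      RecursiveIn' O fun n => g n >>= f
  | prec {f g} : RecursiveIn' O f → RecursiveIn' O g →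
      RecursiveIn' O (Nat.unpaired fun a n =>
        n.rec (f a) fun y IH => do let i ← IH; g (Nat.pair a (Nat.pair y i)))
  | rfind {f} : RecursiveIn' O f →
      RecursiveIn' O fun a => Nat.rfind fun n => (fun m => m = 0) <$> f (Nat.pair a n)

/-- A total function between `Primcodable` types is computable relative to the oracle `O`. -/
def ComputableIn' (O : ℕ → ℕ) {α σ : Type*} [Primcodable α] [Primcodable σ] (f : α → σ) : Prop :=
  RecursiveIn' O fun n =>
    Part.bind ((Encodable.decode (α := α) n) : Part α) fun a =>
      Part.some (Encodable.encode (f a))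

/-- For `k ≥ 2`, `f : ℕ → Fin (k+1)` is `k`-surviving if it is not a path through any
computable `k`-branching subtree of `(k+1)^{<ω}`. -/
def KSurviving (k : ℕ) (f : ℕ → Fin (k + 1)) : Prop :=
  ∀ T : Set (List (Fin (k + 1))),
    IsBranchingTree k T → ComputableTree T → ¬ IsPathThrough f T

/-- The degree of the oracle `O` is computably traceable: there is a computable bound `h`
such that every total `f : ℕ → ℕ` computable in `O` admits a computable trace. -/
def ComputablyTraceableDeg (O : ℕ → ℕ) : Prop :=
  ∃ h : ℕ → ℕ, Computable h ∧
    ∀ f : ℕ → ℕ, ComputableIn' O f →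
      ∃ S : ℕ → Finset ℕ,
        (∃ L : ℕ → List ℕ, Computable L ∧ ∀ n, (L n).toFinset = S n) ∧
        ∀ n, (S n).card ≤ h n ∧ f n ∈ S n

/-!
If `f` is `k`-surviving and computable in `A`, then `g = f mod (s + 1)` is computable in `A`
and `s`-surviving. Indeed, suppose `g` is a path through a computable `s`-branching tree `T`.
Since no node of `T` has all `s + 1` successors, at each string `σ` over `k + 1` the set of
letters `y` with `(σ ++ [y]) mod (s + 1) ∈ T` has at most `k` elements; enlarging it to
exactly `k` elements and taking these sets as the successor sets yields a computable
`k`-branching tree through which `f` is a path.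
-/

section TreeOfSucc

variable {X : Type*}

def treeOfSucc (S : List X → Set X) : Set (List X) :=
  {σ | ∀ i (hi : i < σ.length), σ[i] ∈ S (σ.take i)}

variable {S : List X → Set X}

theorem take_mem_treeOfSucc {σ : List X} (hσ : σ ∈ treeOfSucc S) (n : ℕ) :
    σ.take n ∈ treeOfSucc S := by
  intro i hi
  have hin : i < n := by simp at hi; omega
  simpa [List.take_take, Nat.min_eq_left hin.le] using hσ i (by simp at hi; omega)

theorem append_singleton_mem_treeOfSucc_iff {σ : List X} {x : X} :
    σ ++ [x] ∈ treeOfSucc S ↔ σ ∈ treeOfSucc S ∧ x ∈ S σ := by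
  constructor
  · intro h
    refine ⟨by simpa using take_mem_treeOfSucc h σ.length, ?_⟩
    simpa using h σ.length (by simp)
  · rintro ⟨hσ, hx⟩ i hi
    rcases (show i < σ.length ∨ i = σ.length by simp at hi; omega) with hi | rfl
    · simpa [List.getElem_append_left hi, List.take_append_of_le_length hi.le] using hσ i hi
    · simpa using hx

theorem isSubtree_treeOfSucc : IsSubtree (treeOfSucc S) := by
  rintro σ hσ τ ⟨t, rfl⟩
  simpa using take_mem_treeOfSucc hσ τ.length

theorem succSet_treeOfSucc {σ : List X} (hσ : σ ∈ treeOfSucc S) :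
    succSet (treeOfSucc S) σ = S σ := by
  ext x
  simp [succSet, append_singleton_mem_treeOfSucc_iff, hσ]

theorem isBranchingTree_treeOfSucc {k : ℕ} (hS : ∀ σ, (S σ).ncard = k) :
    IsBranchingTree k (treeOfSucc S) :=
  ⟨isSubtree_treeOfSucc, fun σ hσ => Or.inr (by rw [succSet_treeOfSucc hσ, hS])⟩

theorem isPathThrough_treeOfSucc {f : ℕ → X} (hf : ∀ n, f n ∈ S ((List.range n).map f)) :
    IsPathThrough f (treeOfSucc S) := by
  intro n i hi
  simp only [List.length_map, List.length_range] at hi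
  simpa [← List.map_take, List.take_range, Nat.min_eq_left hi.le] using hf i

theorem computableTree_treeOfSucc [Primcodable X]
    (hS : ComputablePred fun p : List X × X => p.2 ∈ S p.1) :
    ComputableTree (treeOfSucc S) := by
  obtain ⟨χ, hχ, hχS⟩ := ComputablePred.computable_iff.mp hS
  have hχS' (σ x) : x ∈ S σ ↔ χ (σ, x) = true := iff_of_eq (congrFun hχS (σ, x))
  let check (σ : List X) (i : ℕ) : Bool := (σ[i]?).elim true fun x => χ (σ.take i, x)
  have hcheck : Computable₂ check := by
    refine Computable.of_eq (f := fun p : List X × ℕ => _)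
      (Computable.option_casesOn (Computable.list_getElem?.comp Computable.fst Computable.snd)
        (Computable.const true)
        (hχ.comp ((Primrec.list_take.to_comp.comp (Computable.snd.comp Computable.fst)
          (Computable.fst.comp Computable.fst)).pair Computable.snd)).to₂) fun p => ?_
    simp only [check]
    cases p.1[p.2]? <;> rfl
  let checkUpTo (σ : List X) (n : ℕ) : Bool := n.rec true fun i b => b && check σ i
  have hcheckUpTo : ∀ σ n, checkUpTo σ n = true ↔ ∀ i < n, check σ i = true := by
    intro σ n
    induction n with
    | zero => simp [checkUpTo]
    | succ n ih =>
      simp only [checkUpTo, Bool.and_eq_true] at ih ⊢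
      rw [ih, Nat.forall_lt_succ_right]
  refine ComputablePred.computable_iff.mpr ⟨fun σ => checkUpTo σ σ.length,
    Computable.nat_rec Computable.list_length (Computable.const true)
      (Primrec.and.to_comp.comp (Computable.snd.comp Computable.snd)
        (hcheck.comp Computable.fst (Computable.fst.comp Computable.snd))).to₂, ?_⟩
  funext σ
  simp only [hcheckUpTo, check, eq_iff_iff]
  refine ⟨fun hσ i hi => ?_, fun h i hi => ?_⟩
  · simpa [List.getElem?_eq_getElem hi, ← hχS'] using hσ i hi
  · simpa [List.getElem?_eq_getElem hi, ← hχS'] using h i hi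

end TreeOfSucc

theorem IsBranchingTree.exists_append_singleton_notMem {s : ℕ} (hs : s ≠ 0)
    {T : Set (List (Fin (s + 1)))} (hT : IsBranchingTree s T) (τ : List (Fin (s + 1))) :
    ∃ b, τ ++ [b] ∉ T := by
  by_contra! hall
  have hτ : τ ∈ T := hT.1 _ (hall 0) τ (List.prefix_append τ [0])
  have huniv : succSet T τ = Set.univ := Set.eq_univ_of_forall hall
  have := hT.2 τ hτ
  simp only [huniv, Set.ncard_univ, Nat.card_eq_fintype_card, Fintype.card_fin] at this
  omega

section Pullback

variable {β : Type*} {k : ℕ} (π : Fin (k + 1) → β) (T : Set (List β)) [DecidablePred (· ∈ T)]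

def pullbackSucc (σ : List (Fin (k + 1))) : Finset (Fin (k + 1)) :=
  Finset.univ.filter fun y => σ.map π ++ [π y] ∈ T

variable {π T}

theorem card_pullbackSucc_le (hπ : Function.Surjective π) (hT : ∀ τ, ∃ b, τ ++ [b] ∉ T)
    (σ : List (Fin (k + 1))) : (pullbackSucc π T σ).card ≤ k := by
  obtain ⟨b, hb⟩ := hT (σ.map π)
  obtain ⟨y, rfl⟩ := hπ b
  have hy : y ∉ pullbackSucc π T σ := by simpa [pullbackSucc] using hb
  simpa using Finset.card_lt_univ_of_notMem hy

theorem mem_pullbackSucc_of_isPathThrough {f : ℕ → Fin (k + 1)}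
    (hf : IsPathThrough (fun n => π (f n)) T) (n : ℕ) :
    f n ∈ pullbackSucc π T ((List.range n).map f) := by
  simpa [pullbackSucc, List.map_map, List.range_succ, Function.comp_def] using hf (n + 1)

/-- Membership in `F (pullbackSucc π T σ)` only depends on the finitely many bits
`σ.map π ++ [π y] ∈ T`, and any function on a finite type is primitive recursive. -/
theorem computablePred_mem_pullbackSucc [Primcodable β]
    (F : Finset (Fin (k + 1)) → Finset (Fin (k + 1))) (hTc : ComputableTree T) :
    ComputablePred fun p : List (Fin (k + 1)) × Fin (k + 1) => p.2 ∈ F (pullbackSucc π T p.1) := by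
  obtain ⟨χ, hχ, hχT⟩ := ComputablePred.computable_iff.mp hTc
  let bits (σ : List (Fin (k + 1))) : List.Vector Bool (k + 1) :=
    List.Vector.ofFn fun y => χ (σ.map π ++ [π y])
  let rule (q : List.Vector Bool (k + 1) × Fin (k + 1)) : Bool :=
    decide (q.2 ∈ F (Finset.univ.filter fun y => q.1.get y = true))
  have hmap : Computable (List.map π) :=
    (Primrec.list_map Primrec.id ((Primrec.dom_finite π).comp Primrec.snd).to₂).to_comp
  have hbits : Computable bits := Computable.vector_ofFn fun y =>
    hχ.comp (Computable.list_concat.comp hmap (Computable.const (π y)))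
  refine ComputablePred.computable_iff.mpr ⟨fun p => rule (bits p.1, p.2),
    (Primrec.dom_finite rule).to_comp.comp ((hbits.comp Computable.fst).pair Computable.snd), ?_⟩
  funext p
  simp [rule, bits, pullbackSucc, hχT]

end Pullback

theorem exists_isBranchingTree_of_surjective {β : Type*} [Primcodable β] {k : ℕ}
    (π : Fin (k + 1) → β) (hπ : Function.Surjective π) {T : Set (List β)}
    (hT : ∀ τ, ∃ b, τ ++ [b] ∉ T) (hTc : ComputableTree T) :
    ∃ T' : Set (List (Fin (k + 1))), IsBranchingTree k T' ∧ ComputableTree T' ∧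
      ∀ f : ℕ → Fin (k + 1), IsPathThrough (fun n => π (f n)) T → IsPathThrough f T' := by
  classical
  have exists_completion : ∀ r : Finset (Fin (k + 1)), ∃ t, r.card ≤ k → r ⊆ t ∧ t.card = k :=
    fun r =>
    if hr : r.card ≤ k then (Finset.exists_superset_card_eq hr (by simp)).imp fun _ ht _ => ht
    else ⟨r, fun h => absurd h hr⟩
  choose complete hcomplete using exists_completion
  have hsucc (σ) := hcomplete _ (card_pullbackSucc_le hπ hT σ)
  refine ⟨treeOfSucc fun σ => ↑(complete (pullbackSucc π T σ)),
    isBranchingTree_treeOfSucc fun σ => by rw [Set.ncard_coe_finset, (hsucc σ).2],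
    computableTree_treeOfSucc (computablePred_mem_pullbackSucc complete hTc),
    fun f hf => isPathThrough_treeOfSucc fun n => ?_⟩
  exact (hsucc _).1 (mem_pullbackSucc_of_isPathThrough hf n)

theorem Nat.Partrec.recursiveIn' {O : ℕ → ℕ} {f : ℕ →. ℕ} (hf : Nat.Partrec f) :
    RecursiveIn' O f := by
  induction hf with
  | zero => exact .zero
  | succ => exact .succ
  | left => exact .left
  | right => exact .right
  | pair _ _ ih₁ ih₂ => exact .pair ih₁ ih₂
  | comp _ _ ih₁ ih₂ => exact .comp ih₁ ih₂
  | prec _ _ ih₁ ih₂ => exact .prec ih₁ ih₂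
  | rfind _ ih => exact .rfind ih

theorem Computable.comp_computableIn' {O : ℕ → ℕ} {α β γ : Type*} [Primcodable α]
    [Primcodable β] [Primcodable γ] {g : β → γ} {f : α → β} (hg : Computable g)
    (hf : ComputableIn' O f) : ComputableIn' O fun a => g (f a) := by
  unfold ComputableIn' at hf ⊢
  convert RecursiveIn'.comp (Nat.Partrec.recursiveIn' hg) hf using 2 with n
  simp [Part.bind_assoc, Encodable.encodek]

/-- For all `k ≥ s ≥ 2`, every `k`-surviving degree is `s`-surviving. -/
theorem kSurviving_degree_is_sSurviving (k s : ℕ) (hs : 2 ≤ s) (hsk : s ≤ k)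
    (A : ℕ → ℕ) (h : ∃ f : ℕ → Fin (k + 1), ComputableIn' A f ∧ KSurviving k f) :
    ∃ g : ℕ → Fin (s + 1), ComputableIn' A g ∧ KSurviving s g := by
  obtain ⟨f, hfA, hf⟩ := h
  let π (x : Fin (k + 1)) : Fin (s + 1) := Fin.ofNat (s + 1) x
  have hπ : Function.Surjective π := fun y =>
    ⟨Fin.castLE (by omega) y, Fin.ext (by simp [π])⟩
  refine ⟨fun n => π (f n), (Primrec.dom_finite π).to_comp.comp_computableIn' hfA, ?_⟩
  intro T hT hTc hpath
  obtain ⟨T', hT', hT'c, hpull⟩ := exists_isBranchingTree_of_surjective π hπ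
    (hT.exists_append_singleton_notMem (by omega)) hTc
  exact hf T' hT' hT'c (hpull f hpath)
end

section
/- Every hyperimmune degree is k-surviving for every k ≥ 2: if A : ℕ → ℕ is such that some function g : ℕ → ℕ computable relative to A is not dominated by any computable function (i.e., for every computable h : ℕ → ℕ there exist infinitely many n with g(n) > h(n)), then for every k ≥ 2 there is a k-surviving function computable relative to A. -/
/-!
Build `f` in stages, using `g n` as a time bound at stage `n`. Requirement `e` asks that `f` not
be a path through the tree decided by the `e`-th machine. At stage `n`, the least unsatisfied
`e < n` whose machine rejects some one-symbol extension of `f ↾ n` within `g n` steps acts: `f n`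
becomes that symbol and `e` is satisfied for good, so each requirement acts at most once.

If `f` were a path through a computable `k`-branching tree `T` with index `e`, then `e` could never
act. But every node of `T` misses one of the `k + 1` symbols, and the time `h n` the machine needs
to decide all strings of length `n + 1` is computable. At each of the infinitely many stages with
`h n < g n` requirement `e` asks to act, so it does once the higher-priority requirements have
stopped acting.
-/

open Encodable Filter

namespace RecursiveIn'

variable {O : ℕ → ℕ}

theorem of_eq {f g : ℕ →. ℕ} (hf : RecursiveIn' O f) (H : ∀ n, f n = g n) :
    RecursiveIn' O g :=
  (funext H : f = g) ▸ hf

theorem of_partrec {f : ℕ →. ℕ} (hf : Nat.Partrec f) : RecursiveIn' O f := by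
  induction hf with
  | zero => exact .zero
  | succ => exact .succ
  | left => exact .left
  | right => exact .right
  | pair _ _ ih₁ ih₂ => exact .pair ih₁ ih₂
  | comp _ _ ih₁ ih₂ => exact .comp ih₁ ih₂
  | prec _ _ ih₁ ih₂ => exact .prec ih₁ ih₂
  | rfind _ ih => exact .rfind ih

end RecursiveIn'

section ComputableIn'

variable {O : ℕ → ℕ} {α β σ : Type*} [Primcodable α] [Primcodable β] [Primcodable σ]

theorem Computable.computableIn' {f : α → σ} (hf : Computable f) : ComputableIn' O f :=
  RecursiveIn'.of_partrec hf

theorem computableIn'_nat_iff {f : ℕ → σ} :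
    ComputableIn' O f ↔ RecursiveIn' O fun n => Part.some (encode (f n)) := by
  simp [ComputableIn']

theorem ComputableIn'.comp {f : β → σ} {g : α → β} (hf : ComputableIn' O f)
    (hg : ComputableIn' O g) : ComputableIn' O fun a => f (g a) :=
  (RecursiveIn'.comp hf hg).of_eq fun n => by
    cases decode (α := α) n <;> simp [Part.bind_some]

theorem ComputableIn'.pair {f : α → β} {g : α → σ} (hf : ComputableIn' O f)
    (hg : ComputableIn' O g) : ComputableIn' O fun a => (f a, g a) :=
  (RecursiveIn'.pair hf hg).of_eq fun n => by
    cases decode (α := α) n <;> simp [Seq.seq, Part.bind_some]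

theorem ComputableIn'.reverse_map_range {g : ℕ → ℕ} (hg : ComputableIn' O g) :
    ComputableIn' O fun n => ((List.range n).map g).reverse := by
  -- one step of the recursion, as `encode (a :: l) = (Nat.pair a (encode l)).succ`
  have hstep : ComputableIn' O fun p : ℕ =>
      Nat.succ (Nat.pair (g p.unpair.2.unpair.1) p.unpair.2.unpair.2) :=
    (Primrec.succ.comp Primrec₂.natPair).to_comp.computableIn'.comp
      ((hg.comp (Primrec.fst.comp (Primrec.unpair.comp
          (Primrec.snd.comp Primrec.unpair))).to_comp.computableIn').pair
        (Primrec.snd.comp (Primrec.unpair.comp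
          (Primrec.snd.comp Primrec.unpair))).to_comp.computableIn')
  have hrec := (RecursiveIn'.prec .zero (computableIn'_nat_iff.1 hstep)).comp
    (RecursiveIn'.of_partrec (Partrec.nat_iff.1
      (Primrec₂.natPair.comp (Primrec.const 0) Primrec.id).to_comp.partrec))
  refine computableIn'_nat_iff.2 (hrec.of_eq fun n => ?_)
  simp only [PFun.coe_val, id, Part.bind_eq_bind, Part.bind_some, Nat.unpaired, Nat.unpair_pair]
  induction n with
  | zero => rfl
  | succ n ih =>
    simp only [encode_nat] at ih ⊢
    simp [ih, List.range_succ]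

end ComputableIn'

open Nat.Partrec (Code)

theorem Primrec.list_find? {α β : Type*} [Primcodable α] [Primcodable β]
    {f : α → List β} {p : α → β → Bool} (hf : Primrec f) (hp : Primrec₂ p) :
    Primrec fun a => (f a).find? (p a) :=
  (Primrec.list_getElem?.comp hf (Primrec.list_findIdx hf hp)).of_eq fun _ =>
    List.find?_eq_getElem?_findIdx.symm

open Classical in
theorem ComputablePred.exists_code {α : Type*} [Primcodable α] {p : α → Prop}
    (hp : ComputablePred p) :
    ∃ c : Code, ∀ a, c.eval (encode a) = Part.some (if p a then 1 else 0) := by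
  obtain ⟨_, hp⟩ := hp
  obtain ⟨c, hc⟩ := Code.exists_code.1 hp
  refine ⟨c, fun a => ?_⟩
  rw [hc]
  split_ifs <;> simp [*]

theorem Nat.Partrec.Code.exists_computable_evaln_isSome {c : Code} {L : ℕ → List ℕ}
    (hL : Primrec L) (hc : ∀ n, ∀ x ∈ L n, (c.eval x).Dom) :
    ∃ h : ℕ → ℕ, Computable h ∧ ∀ n, ∀ x ∈ L n, (c.evaln (h n) x).isSome := by
  have hex : ∀ n, ∃ s, ∀ x ∈ L n, (c.evaln s x).isSome := fun n =>
    ((eventually_all_finite (L n).finite_toSet).2 fun x hx => by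
      obtain ⟨s, hs⟩ := Code.evaln_complete.1 (Part.get_mem (hc n x hx))
      exact eventually_atTop.2
        ⟨s, fun t hst => Option.isSome_of_mem (Code.evaln_mono hst hs)⟩).exists
  refine ⟨fun n => Nat.find (hex n), Computable.find ?_ hex, fun n => Nat.find_spec (hex n)⟩
  have hhalts : Primrec₂ fun x s : ℕ => (c.evaln s x).isSome :=
    Primrec.option_isSome.comp (Code.primrec_evaln.comp
      (((Primrec.snd.pair (_root_.Primrec.const c)).pair Primrec.fst :
        Primrec fun p : ℕ × ℕ => ((p.2, c), p.1))))
  have hrel : PrimrecRel fun (l : List ℕ) s => ∀ x ∈ l, (c.evaln s x).isSome :=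
    PrimrecRel.forall_mem_list (Primrec₂.primrecRel (by simpa using hhalts))
  exact (hrel.comp (hL.comp Primrec.fst) Primrec.snd).computablePred

def wordsOfLength {α : Type*} (xs : List α) : ℕ → List (List α)
  | 0 => [[]]
  | n + 1 => xs.flatMap fun x => (wordsOfLength xs n).map (x :: ·)

theorem mem_wordsOfLength {α : Type*} {xs τ : List α} (h : ∀ x ∈ τ, x ∈ xs) :
    τ ∈ wordsOfLength xs τ.length := by
  induction τ with
  | nil => simp [wordsOfLength]
  | cons x τ ih =>
    simp only [List.mem_cons, forall_eq_or_imp] at h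
    exact List.mem_flatMap.2 ⟨x, h.1, List.mem_map_of_mem (ih h.2)⟩

theorem primrec_wordsOfLength {α : Type*} [Primcodable α] (xs : List α) :
    Primrec (wordsOfLength xs) := by
  have : Primrec (Nat.rec (motive := fun _ => List (List α)) [[]] fun _ ih =>
      xs.flatMap fun x => ih.map (x :: ·)) :=
    Primrec.nat_rec₁ _ (Primrec.list_flatMap (Primrec.const xs)
      (Primrec.list_map (Primrec.snd.comp Primrec.fst)
        (Primrec.list_cons.comp (Primrec.snd.comp Primrec.fst) Primrec.snd).to₂).to₂).to₂
  refine this.of_eq fun n => ?_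
  induction n with
  | zero => rfl
  | succ n ih => simp only [wordsOfLength, ← ih]

theorem IsBranchingTree.exists_append_notMem {k : ℕ} (hk : 0 < k)
    {T : Set (List (Fin (k + 1)))} (hT : IsBranchingTree k T) {σ : List (Fin (k + 1))}
    (hσ : σ ∈ T) : ∃ x, σ ++ [x] ∉ T := by
  by_contra! hall
  have hcard : (succSet T σ).ncard = k + 1 := by
    rw [show succSet T σ = Set.univ from Set.eq_univ_of_forall hall, Set.ncard_univ,
      Nat.card_eq_fintype_card, Fintype.card_fin]
  rcases hT.2 σ hσ with h | h <;> omega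

namespace Survivor

def rejectsWithin {α : Type*} [Primcodable α] (e b : ℕ) (a : α) : Bool :=
  Code.evaln b (Denumerable.ofNat Code e) (encode a) = some 0

theorem primrec_rejectsWithin {α : Type*} [Primcodable α] :
    Primrec fun q : (ℕ × ℕ) × α => rejectsWithin q.1.1 q.1.2 q.2 :=
  (Primrec.eq.comp (Code.primrec_evaln.comp (((Primrec.snd.comp Primrec.fst).pair
      ((Primrec.ofNat Code).comp (Primrec.fst.comp Primrec.fst))).pair
      (Primrec.encode.comp Primrec.snd))) (Primrec.const (some 0))).decide

open Classical in
theorem rejectsWithin_encode_iff {α : Type*} [Primcodable α] {p : α → Prop} {c : Code}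
    (hc : ∀ a, c.eval (encode a) = Part.some (if p a then 1 else 0)) {b : ℕ} {a : α} :
    rejectsWithin (encode c) b a ↔ ¬ p a ∧ (c.evaln b (encode a)).isSome := by
  rw [rejectsWithin, Denumerable.ofNat_encode, decide_eq_true_iff, Option.isSome_iff_exists]
  constructor
  · intro h
    have h0 := hc a ▸ Code.evaln_sound h
    split_ifs at h0 with hpa <;> simp_all
  · rintro ⟨hpa, v, hv⟩
    have hv0 := hc a ▸ Code.evaln_sound hv
    simp_all

variable (k : ℕ)

/-- The string built so far and the requirements already satisfied. -/
abbrev State := List (Fin (k + 1)) × List ℕ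

def rejectedSucc (e b : ℕ) (σ : List (Fin (k + 1))) : Option (Fin (k + 1)) :=
  (List.finRange (k + 1)).find? fun x => rejectsWithin e b (σ ++ [x])

def requiresAttention (b : ℕ) (s : State k) (e : ℕ) : Bool :=
  decide (e ∉ s.2) && (rejectedSucc k e b s.1).isSome

def attended (b : ℕ) (s : State k) : Option ℕ :=
  (List.range s.1.length).find? (requiresAttention k b s)

def nextSymbol (b : ℕ) (s : State k) : Fin (k + 1) :=
  ((attended k b s).bind fun e => rejectedSucc k e b s.1).getD 0

def step (b : ℕ) (s : State k) : State k :=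
  (s.1 ++ [nextSymbol k b s], ((attended k b s).map (· :: s.2)).getD s.2)

def stage (g : ℕ → ℕ) : ℕ → State k
  | 0 => ([], [])
  | n + 1 => step k (g n) (stage g n)

theorem primrec_rejectedSucc :
    Primrec fun q : (ℕ × ℕ) × List (Fin (k + 1)) => rejectedSucc k q.1.1 q.1.2 q.2 :=
  Primrec.list_find? (Primrec.const _) (primrec_rejectsWithin.comp
    ((Primrec.fst.comp Primrec.fst).pair
      (Primrec.list_concat.comp (Primrec.snd.comp Primrec.fst) Primrec.snd))).to₂

theorem primrec_attended : Primrec₂ (attended k) := by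
  have hnotMem : PrimrecRel fun (l : List ℕ) e => e ∉ l :=
    (PrimrecRel.exists_mem_list Primrec.eq).not.of_eq fun _ _ => by simp
  have hreq : Primrec₂ fun (q : ℕ × State k) e => requiresAttention k q.1 q.2 e :=
    (Primrec.and.comp (hnotMem.decide.comp (Primrec.snd.comp (Primrec.snd.comp Primrec.fst))
      Primrec.snd) (Primrec.option_isSome.comp ((primrec_rejectedSucc k).comp
        ((Primrec.snd.pair (Primrec.fst.comp Primrec.fst)).pair
          (Primrec.fst.comp (Primrec.snd.comp Primrec.fst))))))
  exact Primrec.list_find? (Primrec.list_range.comp (Primrec.list_length.comp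
    (Primrec.fst.comp Primrec.snd))) hreq

theorem primrec_nextSymbol : Primrec₂ (nextSymbol k) :=
  Primrec.option_getD.comp (Primrec.option_bind (primrec_attended k)
    ((primrec_rejectedSucc k).comp ((Primrec.snd.pair (Primrec.fst.comp Primrec.fst)).pair
      (Primrec.fst.comp (Primrec.snd.comp Primrec.fst)))).to₂) (Primrec.const 0)

theorem primrec_step : Primrec₂ (step k) :=
  (Primrec.list_concat.comp (Primrec.fst.comp Primrec.snd) (primrec_nextSymbol k)).pair
    (Primrec.option_getD.comp (Primrec.option_map (primrec_attended k)
      (Primrec.list_cons.comp Primrec.snd (Primrec.snd.comp (Primrec.snd.comp Primrec.fst))).to₂)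
      (Primrec.snd.comp Primrec.snd))

end Survivor

def survivor (k : ℕ) (g : ℕ → ℕ) (n : ℕ) : Fin (k + 1) :=
  Survivor.nextSymbol k (g n) (Survivor.stage k g n)

open Survivor in
theorem computableIn'_survivor {O g : ℕ → ℕ} (hg : ComputableIn' O g) (k : ℕ) :
    ComputableIn' O (survivor k g) := by
  have hstage : ∀ n, stage k g n = ((List.range n).map g).reverse.foldr (step k) ([], []) := by
    intro n
    induction n with
    | zero => rfl
    | succ n ih => simp [stage, ih, List.range_succ]
  have hF : Primrec fun r : List ℕ =>
      nextSymbol k r.headI (r.tail.foldr (step k) ([], [])) :=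
    (primrec_nextSymbol k).comp Primrec.list_headI
      (Primrec.list_foldr Primrec.list_tail (Primrec.const _)
        ((primrec_step k).comp (Primrec.fst.comp Primrec.snd) (Primrec.snd.comp Primrec.snd)).to₂)
  have hsurv : survivor k g = fun n =>
      nextSymbol k (((List.range (n + 1)).map g).reverse.headI)
        (((List.range (n + 1)).map g).reverse.tail.foldr (step k) ([], [])) := by
    funext n
    simp [survivor, hstage, List.range_succ]
  rw [hsurv]
  exact hF.to_comp.computableIn'.comp
    (hg.reverse_map_range.comp Primrec.succ.to_comp.computableIn')

namespace Survivor

variable {k b : ℕ} {s : State k} {e : ℕ} {g : ℕ → ℕ}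

theorem fst_stage (n : ℕ) : (stage k g n).1 = (List.range n).map (survivor k g) := by
  induction n with
  | zero => rfl
  | succ n ih => simp [stage, step, ih, List.range_succ, survivor]

theorem length_fst_stage (n : ℕ) : (stage k g n).1.length = n := by
  simp [fst_stage]

theorem requiresAttention_of_attended (h : attended k b s = some e) :
    requiresAttention k b s e :=
  (List.find?_range_eq_some.1 h).1

theorem notMem_of_attended (h : attended k b s = some e) : e ∉ s.2 := by
  have hreq := requiresAttention_of_attended h
  simp only [requiresAttention, Bool.and_eq_true, decide_eq_true_eq] at hreq
  exact hreq.1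

theorem rejectsWithin_nextSymbol (h : attended k b s = some e) :
    rejectsWithin e b (s.1 ++ [nextSymbol k b s]) := by
  have hsome := requiresAttention_of_attended h
  simp only [requiresAttention, Bool.and_eq_true, Option.isSome_iff_exists] at hsome
  obtain ⟨x, hx⟩ := hsome.2
  have : nextSymbol k b s = x := by simp [nextSymbol, h, hx]
  simpa [this] using List.find?_some hx

theorem requiresAttention_of_rejectsWithin {x : Fin (k + 1)} (he : e ∉ s.2)
    (hx : rejectsWithin e b (s.1 ++ [x])) : requiresAttention k b s e := by
  simpa [requiresAttention, he, rejectedSucc, List.find?_isSome] using ⟨x, hx⟩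

theorem exists_attended_le (he : e < s.1.length) (h : requiresAttention k b s e) :
    ∃ e' ≤ e, attended k b s = some e' := by
  cases ha : attended k b s with
  | none => simpa [h] using List.find?_range_eq_none.1 ha e he
  | some e' =>
    refine ⟨e', not_lt.1 fun hlt => ?_, rfl⟩
    simpa [h] using (List.find?_range_eq_some.1 ha).2.2 e hlt

theorem mem_step_snd : e ∈ (step k b s).2 ↔ e ∈ s.2 ∨ attended k b s = some e := by
  cases h : attended k b s <;> simp [step, h, eq_comm, or_comm]

theorem mem_snd_stage_mono {n m : ℕ} (hnm : n ≤ m) (h : e ∈ (stage k g n).2) :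
    e ∈ (stage k g m).2 := by
  induction m, hnm using Nat.le_induction with
  | base => exact h
  | succ m _ ih => exact mem_step_snd.2 (Or.inl ih)

theorem notMem_snd_stage (h : ∀ n, attended k (g n) (stage k g n) ≠ some e) (n : ℕ) :
    e ∉ (stage k g n).2 := by
  induction n with
  | zero => simp [stage]
  | succ n ih => simpa [stage, mem_step_snd, ih] using h n

theorem eventually_attended_ne (E : ℕ) :
    ∀ᶠ n in atTop, ∀ e < E, attended k (g n) (stage k g n) ≠ some e := by
  induction E with
  | zero => simp
  | succ E ih =>
    by_cases hE : ∃ n₀, attended k (g n₀) (stage k g n₀) = some E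
    · obtain ⟨n₀, hn₀⟩ := hE
      filter_upwards [ih, eventually_gt_atTop n₀] with n hn hn₀n e he hne
      rcases Nat.lt_succ_iff_lt_or_eq.1 he with he | rfl
      · exact hn e he hne
      · exact notMem_of_attended hne (mem_snd_stage_mono hn₀n (mem_step_snd.2 (Or.inr hn₀)))
    · filter_upwards [ih] with n hn e he hne
      rcases Nat.lt_succ_iff_lt_or_eq.1 he with he | rfl
      · exact hn e he hne
      · exact hE ⟨n, hne⟩

theorem exists_attended_eq (h : ∃ᶠ n in atTop, requiresAttention k (g n) (stage k g n) e) :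
    ∃ n, attended k (g n) (stage k g n) = some e := by
  obtain ⟨n, hreq, hne, hen⟩ := (h.and_eventually
    ((eventually_attended_ne (k := k) (g := g) e).and (eventually_gt_atTop e))).exists
  obtain ⟨e', he', ha⟩ := exists_attended_le (by rwa [length_fst_stage]) hreq
  rcases he'.lt_or_eq with hlt | rfl
  · exact absurd ha (hne e' hlt)
  · exact ⟨n, ha⟩

end Survivor

open Survivor in
theorem kSurviving_survivor {k : ℕ} (hk : 0 < k) {g : ℕ → ℕ}
    (hg : ∀ h : ℕ → ℕ, Computable h → {n : ℕ | h n < g n}.Infinite) :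
    KSurviving k (survivor k g) := by
  intro T hT hTc hpath
  obtain ⟨c, hc⟩ := ComputablePred.exists_code hTc
  have hstageT : ∀ n, (stage k g n).1 ∈ T := fun n => fst_stage n ▸ hpath n
  -- requirement `encode c` never acts: the symbol it would choose leaves `T`
  have hnever : ∀ n, attended k (g n) (stage k g n) ≠ some (encode c) := fun n ha =>
    ((rejectsWithin_encode_iff hc).1 (rejectsWithin_nextSymbol ha)).1 (hstageT (n + 1))
  set L : ℕ → List ℕ := fun n => (wordsOfLength (List.finRange (k + 1)) (n + 1)).map encode
  have hL : Primrec L := Primrec.list_map ((primrec_wordsOfLength _).comp Primrec.succ)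
    (Primrec.encode.comp Primrec.snd).to₂
  obtain ⟨h, hh, hhalt⟩ := Code.exists_computable_evaln_isSome (c := c) hL (by simp [L, hc])
  obtain ⟨n, hn⟩ := exists_attended_eq (e := encode c) <|
      (Nat.frequently_atTop_iff_infinite.2 (hg h hh)).mono fun n (hhn : h n < g n) => by
    obtain ⟨x, hx⟩ := hT.exists_append_notMem hk (hstageT n)
    have hword : encode ((stage k g n).1 ++ [x]) ∈ L n := List.mem_map_of_mem <| by
      simpa [length_fst_stage] using
        mem_wordsOfLength (xs := List.finRange (k + 1)) (τ := (stage k g n).1 ++ [x]) (by simp)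
    obtain ⟨v, hv⟩ := Option.isSome_iff_exists.1 (hhalt n _ hword)
    have hrej : rejectsWithin (encode c) (g n) ((stage k g n).1 ++ [x]) :=
      (rejectsWithin_encode_iff hc).2 ⟨hx, Option.isSome_of_mem (Code.evaln_mono hhn.le hv)⟩
    exact requiresAttention_of_rejectsWithin (notMem_snd_stage hnever n) hrej
  exact hnever n hn

/-- every hyperimmune degree is `k`-surviving for every `k ≥ 2`. -/
theorem hyperimmune_is_kSurviving (A : ℕ → ℕ)
    (hA : ∃ g : ℕ → ℕ, ComputableIn' A g ∧
      ∀ h : ℕ → ℕ, Computable h → {n : ℕ | h n < g n}.Infinite)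
    (k : ℕ) (hk : 2 ≤ k) :
    ∃ f : ℕ → Fin (k + 1), ComputableIn' A f ∧ KSurviving k f := by
  obtain ⟨g, hgA, hg⟩ := hA
  exact ⟨survivor k g, computableIn'_survivor hgA k, kSurviving_survivor (by omega) hg⟩
end
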